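/- For a 1 × L laptop (L > 1) centered at the corner of a quarter-plane at angle θ to the diagonal position, the footprint area is a continuous function of θ that attains its strict minimum 1/4 at the symmetric position and is strictly larger for all other angles in a neighborhood where the footprint stays a triangle. -/

import Mathlib

/-!
The unit square `rect θ 1` lies inside the laptop and is invariant under the quarter turn, whose
iterates move `Q` onto the other three quadrants; hence it always meets `Q` in area exactly `1/4`.
The rest of the laptop consists of the two end strips `1/2 < |v| ≤ L/2`, in the laptop's own
coordinates `(u, v)`. At `θ = π/4` they miss `Q`; at any other angle some ray in the open quadrant
makes an angle of less than `π/4` with the laptop's long axis and crosses a strip, so the strips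
meet `Q` in a nonempty open set. Continuity comes from `c • rect θ' L ⊆ rect θ L` for `c < 1` and
`θ` near `θ'`, which bounds the ratio of the two areas by `c²`.
-/

open Real MeasureTheory

/-- The rectangle of width 1 and length `L`, centered at the origin and rotated by `θ`
(width measured across the first rotated coordinate, so `θ = π/4` is the symmetric
diagonal position over the quarter-plane `Q` below). -/
def rect (θ L : ℝ) : Set (ℝ × ℝ) :=
  {p | |Real.cos θ * p.1 + Real.sin θ * p.2| ≤ 1 / 2 ∧
       |(-Real.sin θ) * p.1 + Real.cos θ * p.2| ≤ L / 2}

/-- The quarter-plane modeling the table corner. -/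
def Q : Set (ℝ × ℝ) := {p | p.1 ≤ 0 ∧ p.2 ≤ 0}

open Set Pointwise

noncomputable def frame (θ : ℝ) : ℝ × ℝ →ₗ[ℝ] ℝ × ℝ where
  toFun p := (cos θ * p.1 + sin θ * p.2, -sin θ * p.1 + cos θ * p.2)
  map_add' p q := by ext <;> simp <;> ring
  map_smul' c p := by ext <;> simp <;> ring

@[simp]
lemma frame_apply (θ : ℝ) (p : ℝ × ℝ) :
    frame θ p = (cos θ * p.1 + sin θ * p.2, -sin θ * p.1 + cos θ * p.2) := rfl

lemma frame_add (θ θ' : ℝ) (p : ℝ × ℝ) : frame (θ + θ') p = frame θ (frame θ' p) := by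
  simp only [frame_apply, cos_add, sin_add]
  exact Prod.ext (by ring) (by ring)

lemma frame_pi_div_two (p : ℝ × ℝ) : frame (π / 2) p = (p.2, -p.1) := by simp

lemma det_frame (θ : ℝ) : LinearMap.det (frame θ) = 1 := by
  rw [← LinearMap.det_toMatrix (Module.Basis.finTwoProd ℝ), Matrix.det_fin_two]
  simpa [LinearMap.toMatrix_apply, sq] using cos_sq_add_sin_sq θ

lemma measurePreserving_frame (θ : ℝ) : MeasurePreserving (frame θ) := by
  refine ⟨(frame θ).continuous_of_finiteDimensional.measurable, ?_⟩
  rw [Measure.map_linearMap_addHaar_eq_smul_addHaar _ (by simp [det_frame])]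
  simp [det_frame]

lemma abs_frame_fst_le (φ : ℝ) (w : ℝ × ℝ) : |(frame φ w).1| ≤ |w.1| + |sin φ| * |w.2| := by
  rw [frame_apply, ← abs_mul]
  refine (abs_add_le _ _).trans (add_le_add_left ?_ _)
  rw [abs_mul]
  exact mul_le_of_le_one_left (abs_nonneg _) (abs_cos_le_one φ)

lemma abs_frame_snd_le (φ : ℝ) (w : ℝ × ℝ) : |(frame φ w).2| ≤ |sin φ| * |w.1| + |w.2| := by
  rw [frame_apply, ← abs_mul, ← abs_neg (sin φ * w.1), ← neg_mul]
  refine (abs_add_le _ _).trans (add_le_add_right ?_ _)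
  rw [abs_mul]
  exact mul_le_of_le_one_left (abs_nonneg _) (abs_cos_le_one φ)

lemma mem_rect_iff {θ L : ℝ} {p : ℝ × ℝ} :
    p ∈ rect θ L ↔ |(frame θ p).1| ≤ 1 / 2 ∧ |(frame θ p).2| ≤ L / 2 := Iff.rfl

lemma rect_eq_preimage_frame (θ L : ℝ) :
    rect θ L = frame θ ⁻¹' (Icc (-(1 / 2)) (1 / 2) ×ˢ Icc (-(L / 2)) (L / 2)) := by
  ext p
  rw [mem_rect_iff, abs_le, abs_le]
  rfl

lemma measurableSet_rect (θ L : ℝ) : MeasurableSet (rect θ L) := by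
  rw [rect_eq_preimage_frame]
  exact (measurePreserving_frame θ).measurable (measurableSet_Icc.prod measurableSet_Icc)

lemma volume_rect (θ L : ℝ) : volume (rect θ L) = ENNReal.ofReal L := by
  rw [rect_eq_preimage_frame, (measurePreserving_frame θ).measure_preimage
    (measurableSet_Icc.prod measurableSet_Icc).nullMeasurableSet,
    Measure.volume_eq_prod, Measure.prod_prod, Real.volume_Icc, Real.volume_Icc]
  norm_num

lemma rect_mono (θ : ℝ) {L L' : ℝ} (h : L ≤ L') : rect θ L ⊆ rect θ L' :=
  fun _ hp => ⟨hp.1, hp.2.trans (by linarith)⟩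

lemma preimage_frame_pi_div_two_rect_one (θ : ℝ) : frame (π / 2) ⁻¹' rect θ 1 = rect θ 1 := by
  ext p
  have hu : cos θ * p.2 + sin θ * -p.1 = -sin θ * p.1 + cos θ * p.2 := by ring
  have hv : -sin θ * p.2 + cos θ * -p.1 = -(cos θ * p.1 + sin θ * p.2) := by ring
  simp only [mem_preimage, frame_pi_div_two, rect, mem_ofPred_eq, hu, hv, abs_neg, and_comm]

lemma measurableSet_Q : MeasurableSet Q :=
  (measurableSet_le measurable_fst measurable_const).inter
    (measurableSet_le measurable_snd measurable_const)

lemma measure_inter_union_preimage_eq_two_mul {α : Type*} [MeasurableSpace α] {μ : Measure α}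
    {f : α → α} (hf : MeasurePreserving f μ μ) {s t : Set α} (hs : MeasurableSet s)
    (ht : MeasurableSet t) (hfs : f ⁻¹' s = s) (hnull : μ (t ∩ f ⁻¹' t) = 0) :
    μ (s ∩ (t ∪ f ⁻¹' t)) = 2 * μ (s ∩ t) := by
  have hdisj : AEDisjoint μ (s ∩ t) (s ∩ f ⁻¹' t) :=
    measure_mono_null (fun _ hp => (⟨hp.1.2, hp.2.2⟩ : _ ∈ t ∩ f ⁻¹' t)) hnull
  rw [inter_union_distrib_left,
    measure_union₀ (hs.inter (hf.measurable ht)).nullMeasurableSet hdisj, ← hfs,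
    ← preimage_inter, hfs, hf.measure_preimage (hs.inter ht).nullMeasurableSet, two_mul]

lemma volume_singleton_prod_univ : volume ({0} ×ˢ univ : Set (ℝ × ℝ)) = 0 := by
  simp [Measure.volume_eq_prod, Measure.prod_prod]

lemma volume_univ_prod_singleton : volume (univ ×ˢ {0} : Set (ℝ × ℝ)) = 0 := by
  simp [Measure.volume_eq_prod, Measure.prod_prod]

lemma four_mul_volume_inter_Q {s : Set (ℝ × ℝ)} (hs : MeasurableSet s)
    (hrot : frame (π / 2) ⁻¹' s = s) : 4 * volume (s ∩ Q) = volume s := by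
  set H : Set (ℝ × ℝ) := {p | p.2 ≤ 0}
  have hHm : MeasurableSet H := measurableSet_le measurable_snd measurable_const
  have hQH : Q ∪ frame (π / 2) ⁻¹' Q = H := by
    ext p
    simp only [Q, H, mem_union, mem_preimage, frame_pi_div_two, mem_ofPred_eq]
    constructor
    · rintro (⟨-, h⟩ | ⟨h, -⟩) <;> exact h
    · intro h; rcases le_total p.1 0 with h' | h' <;> [left; right] <;> constructor <;> linarith
  have hH : H ∪ frame π ⁻¹' H = univ := by
    ext p
    simp only [H, mem_union, mem_preimage, frame_apply, cos_pi, sin_pi, mem_ofPred_eq, mem_univ,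
      iff_true]
    rcases le_total p.2 0 with h | h <;> [left; right] <;> linarith
  have hQnull : volume (Q ∩ frame (π / 2) ⁻¹' Q) = 0 :=
    measure_mono_null (fun p hp => mem_prod.2
      ⟨mem_singleton_iff.2 (le_antisymm hp.1.1 (by simpa using hp.2.2)), mem_univ _⟩)
      volume_singleton_prod_univ
  have hHnull : volume (H ∩ frame π ⁻¹' H) = 0 :=
    measure_mono_null (fun p hp => mem_prod.2
      ⟨mem_univ _, mem_singleton_iff.2 (le_antisymm hp.1 (by simpa [H] using hp.2))⟩)
      volume_univ_prod_singleton
  have hpi : frame π ⁻¹' s = s := by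
    have : ⇑(frame π) = frame (π / 2) ∘ frame (π / 2) := by
      ext1 p; rw [Function.comp_apply, ← frame_add, add_halves]
    rw [this, preimage_comp, hrot, hrot]
  calc 4 * volume (s ∩ Q) = 2 * (2 * volume (s ∩ Q)) := by rw [← mul_assoc]; norm_num
    _ = volume s := by
      rw [← measure_inter_union_preimage_eq_two_mul (measurePreserving_frame _) hs measurableSet_Q
        hrot hQnull, hQH, ← measure_inter_union_preimage_eq_two_mul (measurePreserving_frame _) hs
        hHm hpi hHnull, hH, inter_univ]

lemma volume_rect_one_inter_Q (θ : ℝ) : volume (rect θ 1 ∩ Q) = 1 / 4 := by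
  have h := four_mul_volume_inter_Q (measurableSet_rect θ 1) (preimage_frame_pi_div_two_rect_one θ)
  rw [volume_rect, ENNReal.ofReal_one] at h
  rw [ENNReal.eq_div_iff (by norm_num) (by norm_num), h]

lemma rect_pi_div_four_inter_Q {L : ℝ} (hL : 1 ≤ L) :
    rect (π / 4) L ∩ Q = rect (π / 4) 1 ∩ Q := by
  refine (inter_subset_inter_left _ (rect_mono _ hL)).antisymm' fun p ⟨⟨hu, _⟩, hx, hy⟩ => ?_
  refine ⟨⟨hu, ?_⟩, hx, hy⟩
  simp only [cos_pi_div_four, sin_pi_div_four] at hu ⊢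
  have h2 : 0 < √2 / 2 := by positivity
  exact (abs_le_abs (by nlinarith) (by nlinarith)).trans (le_of_eq_of_le (abs_neg _) hu)

lemma exists_pos_mul_mem_strip {L a b : ℝ} (hL : 1 < L) (hab : |b| < |a|) :
    ∃ r > 0, |r * b| < 1 / 2 ∧ 1 / 2 < |r * a| ∧ |r * a| < L / 2 := by
  have ha : 0 < |a| := (abs_nonneg b).trans_lt hab
  obtain ⟨r, hr1, hr2⟩ : ∃ r, 1 / (2 * |a|) < r ∧ r < min (L / (2 * |a|)) (1 / (|a| + |b|)) :=
    exists_between (lt_min (by gcongr) (by gcongr; linarith))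
  have hr : 0 < r := lt_trans (by positivity) hr1
  rw [lt_min_iff, lt_div_iff₀ (by positivity), lt_div_iff₀ (by positivity)] at hr2
  rw [div_lt_iff₀ (by positivity)] at hr1
  refine ⟨r, hr, ?_⟩
  simp only [abs_mul, abs_of_pos hr]
  exact ⟨by nlinarith, by linarith, by linarith⟩

/- The ray through `-(cos γ, sin γ)` runs inside the open quadrant, and `hcos` says that it makes an
angle of less than `π / 4` with the long axis of `rect θ L`, so it crosses one of the end strips. -/
lemma volume_rect_diff_inter_Q_pos {L θ γ : ℝ} (hL : 1 < L) (hγ0 : 0 < γ) (hγ : γ < π / 2)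
    (hcos : cos (2 * (θ - γ)) < 0) : 0 < volume ((rect θ L \ rect θ 1) ∩ Q) := by
  set U : Set (ℝ × ℝ) := {p | p.1 < 0 ∧ p.2 < 0 ∧ |(frame θ p).1| < 1 / 2 ∧
    1 / 2 < |(frame θ p).2| ∧ |(frame θ p).2| < L / 2}
  have hU : IsOpen U := by
    have := (frame θ).continuous_of_finiteDimensional
    refine (isOpen_lt (by fun_prop) (by fun_prop)).and ((isOpen_lt (by fun_prop) (by fun_prop)).and
      ((isOpen_lt (by fun_prop) (by fun_prop)).and ((isOpen_lt (by fun_prop) (by fun_prop)).and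
      (isOpen_lt (by fun_prop) (by fun_prop)))))
  have hUsub : U ⊆ (rect θ L \ rect θ 1) ∩ Q := fun p ⟨hx, hy, hu, hv1, hv2⟩ =>
    ⟨⟨⟨hu.le, hv2.le⟩, fun h => (h.2.trans_lt hv1).false⟩, hx.le, hy.le⟩
  have hsc : |-cos (θ - γ)| < |sin (θ - γ)| := by
    rw [abs_neg, ← sq_lt_sq]
    have := cos_sq_add_sin_sq (θ - γ)
    rw [cos_two_mul] at hcos
    linarith
  obtain ⟨r, hr, hu, hv1, hv2⟩ := exists_pos_mul_mem_strip hL hsc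
  have hframe : frame θ (r • (-cos γ, -sin γ)) = (r * -cos (θ - γ), r * sin (θ - γ)) := by
    simp only [frame_apply, cos_sub, sin_sub, Prod.smul_mk, smul_eq_mul]
    exact Prod.ext (by ring) (by ring)
  have hcγ : 0 < cos γ := cos_pos_of_mem_Ioo ⟨by linarith, hγ⟩
  have hsγ : 0 < sin γ := sin_pos_of_pos_of_lt_pi hγ0 (by linarith [pi_pos])
  refine (hU.measure_pos volume ⟨r • (-cos γ, -sin γ), ?_⟩).trans_le (measure_mono hUsub)
  simp only [U, mem_ofPred_eq, hframe]
  simp only [Prod.smul_mk, smul_eq_mul]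
  exact ⟨by nlinarith, by nlinarith, hu, hv1, hv2⟩

lemma one_fourth_lt_volume_rect_inter_Q {L θ : ℝ} (hL : 1 < L)
    (hθ : ¬∃ k : ℤ, θ = π / 4 + k * π) : 1 / 4 < volume (rect θ L ∩ Q) := by
  set t := toIcoMod pi_pos 0 (θ - π / 4)
  obtain ⟨ht0, htπ⟩ : 0 ≤ t ∧ t < π := by simpa using toIcoMod_mem_Ico pi_pos 0 (θ - π / 4)
  have hk := self_sub_toIcoMod_eq_mul pi_pos 0 (θ - π / 4)
  have ht : 0 < t := ht0.lt_of_ne fun h => hθ ⟨toIcoDiv pi_pos 0 (θ - π / 4), by linarith⟩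
  have hcos : cos (2 * (θ - t / 2)) < 0 := by
    have : 2 * (θ - t / 2) = (t + π / 2) + toIcoDiv pi_pos 0 (θ - π / 4) * (2 * π) := by linarith
    rw [this, cos_add_int_mul_two_pi, cos_add_pi_div_two, neg_lt_zero]
    exact sin_pos_of_pos_of_lt_pi ht htπ
  have hpos := volume_rect_diff_inter_Q_pos hL (half_pos ht) (by linarith) hcos
  rw [← measure_inter_add_sdiff _ (measurableSet_rect θ 1), inter_right_comm,
    inter_eq_right.2 (rect_mono θ hL.le), volume_rect_one_inter_Q, inter_sdiff_right_comm]
  exact ENNReal.lt_add_right (by norm_num) hpos.ne'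

lemma smul_rect_subset_rect {L c : ℝ} (hL : 0 < L) (hc0 : 0 ≤ c) (hc1 : c < 1) :
    ∃ ε > 0, ∀ θ θ', dist θ θ' < ε → c • rect θ' L ⊆ rect θ L := by
  set ε := (1 - c) * min L L⁻¹
  have hεL : ε * L ≤ 1 - c := by
    rw [mul_assoc]
    exact mul_le_of_le_one_right (by linarith)
      ((mul_le_mul_of_nonneg_right (min_le_right _ _) hL.le).trans_eq (inv_mul_cancel₀ hL.ne'))
  have hε : ε ≤ (1 - c) * L := mul_le_mul_of_nonneg_left (min_le_left _ _) (by linarith)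
  refine ⟨ε, mul_pos (by linarith) (lt_min hL (inv_pos.2 hL)), fun θ θ' hθ => ?_⟩
  have hsin : |sin (θ - θ')| ≤ ε := abs_sin_le_abs.trans hθ.le
  refine smul_set_subset_iff.2 fun p hp => ?_
  obtain ⟨hu, hv⟩ := mem_rect_iff.1 hp
  have hrot : frame θ (c • p) = c • frame (θ - θ') (frame θ' p) := by
    rw [map_smul, ← frame_add, sub_add_cancel]
  have hsu : |sin (θ - θ')| * |(frame θ' p).1| ≤ ε * (1 / 2) :=
    mul_le_mul hsin hu (abs_nonneg _) (hsin.trans' (abs_nonneg _))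
  have hsv : |sin (θ - θ')| * |(frame θ' p).2| ≤ ε * (L / 2) :=
    mul_le_mul hsin hv (abs_nonneg _) (hsin.trans' (abs_nonneg _))
  have h1 : |(frame (θ - θ') (frame θ' p)).1| ≤ 1 / 2 + (1 - c) / 2 := by
    linarith [abs_frame_fst_le (θ - θ') (frame θ' p)]
  have h2 : |(frame (θ - θ') (frame θ' p)).2| ≤ L / 2 + (1 - c) * L / 2 := by
    linarith [abs_frame_snd_le (θ - θ') (frame θ' p)]
  rw [mem_rect_iff, hrot, Prod.smul_fst, Prod.smul_snd, smul_eq_mul, smul_eq_mul, abs_mul,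
    abs_mul, abs_of_nonneg hc0]
  have hL' : 0 ≤ L * (1 - c) ^ 2 := by positivity
  constructor
  · nlinarith [mul_le_mul_of_nonneg_left h1 hc0]
  · nlinarith [mul_le_mul_of_nonneg_left h2 hc0]

lemma ofReal_sq_mul_volume_inter_Q_le {s t : Set (ℝ × ℝ)} {c : ℝ} (hc : 0 ≤ c)
    (hst : c • s ⊆ t) : ENNReal.ofReal (c ^ 2) * volume (s ∩ Q) ≤ volume (t ∩ Q) := by
  have hQ : c • Q ⊆ Q := smul_set_subset_iff.2 fun p hp =>
    ⟨mul_nonpos_of_nonneg_of_nonpos hc hp.1, mul_nonpos_of_nonneg_of_nonpos hc hp.2⟩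
  calc ENNReal.ofReal (c ^ 2) * volume (s ∩ Q) = volume (c • (s ∩ Q)) := by
        simp [Measure.addHaar_smul_of_nonneg volume hc]
    _ ≤ volume (t ∩ Q) := measure_mono (smul_set_inter_subset.trans (inter_subset_inter hst hQ))

lemma uniformContinuous_of_forall_mul_le {f : ℝ → ℝ} {M : ℝ} (hM : ∀ x, f x ≤ M)
    (h : ∀ c ∈ Ioo (0 : ℝ) 1, ∃ ε > 0, ∀ x y, dist x y < ε → c * f y ≤ f x) :
    UniformContinuous f := by
  rw [Metric.uniformContinuous_iff]
  intro η hη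
  set c := (|M| + 1) / (|M| + 1 + η)
  have hcη : c * (|M| + 1 + η) = |M| + 1 := div_mul_cancel₀ _ (by positivity)
  have hc : c ∈ Ioo (0 : ℝ) 1 := ⟨by positivity, (div_lt_one (by positivity)).2 (by linarith)⟩
  obtain ⟨ε, hε, hf⟩ := h c hc
  refine ⟨ε, hε, fun {x y} hxy => ?_⟩
  have hgap : ∀ z, (1 - c) * f z < η := fun z => by
    nlinarith [hM z, le_abs_self M, hc.2, abs_nonneg M]
  rw [Real.dist_eq, abs_sub_lt_iff]
  constructor
  · nlinarith [hf y x (dist_comm x y ▸ hxy), hgap x]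
  · nlinarith [hf x y hxy, hgap y]

lemma continuous_volume_rect_inter_Q {L : ℝ} (hL : 0 < L) :
    Continuous fun θ => (volume (rect θ L ∩ Q)).toReal := by
  have hle θ : volume (rect θ L ∩ Q) ≤ ENNReal.ofReal L :=
    (measure_mono inter_subset_left).trans_eq (volume_rect θ L)
  refine (uniformContinuous_of_forall_mul_le (M := L)
    (fun θ => ENNReal.toReal_le_of_le_ofReal hL.le (hle θ)) fun c hc => ?_).continuous
  obtain ⟨ε, hε, hsub⟩ := smul_rect_subset_rect hL (sqrt_nonneg c)
    (by simpa using Real.sqrt_lt_sqrt hc.1.le hc.2)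
  refine ⟨ε, hε, fun θ θ' h => ?_⟩
  have hmono := ofReal_sq_mul_volume_inter_Q_le (sqrt_nonneg c) (hsub θ θ' h)
  rw [sq_sqrt hc.1.le] at hmono
  simpa [ENNReal.toReal_mul, ENNReal.toReal_ofReal hc.1.le] using
    ENNReal.toReal_mono ((hle θ).trans_lt ENNReal.ofReal_lt_top).ne hmono

/-- For a `1 × L` laptop (`L > 1`) centered at the corner of a quarter-plane, the
footprint area `A(θ)` is a continuous function of the orientation `θ`, equals `1/4` at the
symmetric position `θ = π/4`, and is strictly greater than `1/4` for every orientation not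
equivalent to the symmetric position (modulo the symmetries of the rectangle). -/
theorem corner_area_continuous_strict_min (L : ℝ) (hL : 1 < L) :
    Continuous (fun θ : ℝ => (volume (rect θ L ∩ Q)).toReal) ∧
      volume (rect (π / 4) L ∩ Q) = 1 / 4 ∧
      ∀ θ : ℝ, (¬∃ k : ℤ, θ = π / 4 + k * π) → volume (rect θ L ∩ Q) > 1 / 4 :=
  ⟨continuous_volume_rect_inter_Q (by linarith),
    by rw [rect_pi_div_four_inter_Q hL.le, volume_rect_one_inter_Q],
    fun _ hθ => one_fourth_lt_volume_rect_inter_Q hL hθ⟩
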